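/- arXiv:1603.01821 — 2 statements merged into one kernel-verified Lean document; each statement's English description precedes it below -/
import Mathlib

section
/- Let x, w, q, e : I → ℝ be differentiable functions on a real interval I with w(t) > 0 for all t, satisfying x'(t) = e(t), w'(t) = −w(t)²·(2x(t) + q(t)), q'(t) = −2q(t)·(2x(t) + q(t)), e'(t) = 0. Then the function t ↦ q(t)·exp(2/w(t)) is constant on I. In particular, if q(t₀) = exp(−2/w(t₀)) for some t₀, then q(t) = exp(−2/w(t)) for all t ∈ I. -/
open Real

theorem Convex.eq_of_hasDerivWithinAt_zero {E : Type*} [NormedAddCommGroup E] [NormedSpace ℝ E]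
    {s : Set ℝ} {f : ℝ → E} (hs : Convex ℝ s) (hf : ∀ t ∈ s, HasDerivWithinAt f 0 s t)
    {x y : ℝ} (hx : x ∈ s) (hy : y ∈ s) : f x = f y := by
  have bound : ∀ t ∈ s, ‖(0 : E)‖ ≤ 0 := fun _ _ => norm_zero.le
  simpa only [zero_mul, norm_le_zero_iff, sub_eq_zero, eq_comm] using
    hs.norm_image_sub_le_of_norm_hasDerivWithin_le hf bound hx hy

/-- Along `w' = -w² g` the exponent `c / w` grows at rate `c g`, exactly cancelling the
logarithmic decay rate `-c g` of `q`. -/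
theorem hasDerivWithinAt_mul_exp_div_eq_zero {q w : ℝ → ℝ} {s : Set ℝ} {t c g : ℝ}
    (hw : w t ≠ 0) (hw' : HasDerivWithinAt w (-(w t) ^ 2 * g) s t)
    (hq' : HasDerivWithinAt q (-c * q t * g) s t) :
    HasDerivWithinAt (fun t => q t * exp (c / w t)) 0 s t := by
  have hcw : HasDerivWithinAt (fun t => c / w t) (c * g) s t := by
    simp_rw [div_eq_mul_inv]
    refine ((hw'.inv hw).const_mul c).congr_deriv ?_
    field_simp
  exact (hq'.mul hcw.exp).congr_deriv (by ring)

theorem mul_exp_eq_one_iff {q a : ℝ} : q * exp a = 1 ↔ q = exp (-a) := by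
  rw [exp_neg, mul_eq_one_iff_eq_inv₀ (exp_pos a).ne']

theorem stmt6_general (I : Set ℝ) (hI : I.OrdConnected)
    (x w q : ℝ → ℝ)
    (hw : ∀ t ∈ I, 0 < w t)
    (hw' : ∀ t ∈ I, HasDerivWithinAt w (-(w t) ^ 2 * (2 * x t + q t)) I t)
    (hq' : ∀ t ∈ I, HasDerivWithinAt q (-2 * q t * (2 * x t + q t)) I t) :
    (∀ s ∈ I, ∀ t ∈ I, q s * Real.exp (2 / w s) = q t * Real.exp (2 / w t)) ∧
    (∀ t₀ ∈ I, q t₀ = Real.exp (-(2 / w t₀)) →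
      ∀ t ∈ I, q t = Real.exp (-(2 / w t))) := by
  have hconst : ∀ s ∈ I, ∀ t ∈ I, q s * exp (2 / w s) = q t * exp (2 / w t) :=
    fun s hs t ht => hI.convex.eq_of_hasDerivWithinAt_zero
      (fun τ hτ => hasDerivWithinAt_mul_exp_div_eq_zero (hw τ hτ).ne' (hw' τ hτ) (hq' τ hτ)) hs ht
  refine ⟨hconst, fun t₀ ht₀ h₀ t ht => ?_⟩
  rw [← mul_exp_eq_one_iff, hconst t ht t₀ ht₀, mul_exp_eq_one_iff]
  exact h₀

/-- Invariance of the set `Q : q = exp(-2/ε̂)` for the extended system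
`x' = e, ε̂' = −ε̂²(2x+q), q' = −2q(2x+q), e' = 0` obtained from the tanh-regularized
visible fold in the chart `ȳ = 1` (here `w` plays the role of `ε̂`). -/
theorem stmt6 (I : Set ℝ) (hI : I.OrdConnected)
    (x w q e : ℝ → ℝ)
    (hw : ∀ t ∈ I, 0 < w t)
    (hx' : ∀ t ∈ I, HasDerivWithinAt x (e t) I t)
    (hw' : ∀ t ∈ I, HasDerivWithinAt w (-(w t) ^ 2 * (2 * x t + q t)) I t)
    (hq' : ∀ t ∈ I, HasDerivWithinAt q (-2 * q t * (2 * x t + q t)) I t)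
    (he' : ∀ t ∈ I, HasDerivWithinAt e 0 I t) :
    (∀ s ∈ I, ∀ t ∈ I, q s * Real.exp (2 / w s) = q t * Real.exp (2 / w t)) ∧
    (∀ t₀ ∈ I, q t₀ = Real.exp (-(2 / w t₀)) →
      ∀ t ∈ I, q t = Real.exp (-(2 / w t))) :=
  stmt6_general I hI x w q hw hw' hq'
end

section
/- For each C ≥ 1, the function q_C : ℝ → ℝ given by q_C(x) = 2·e^{−2x²} / ( √(2π) · ( erf(√2·x) + C ) ) is well-defined (the denominator is strictly positive for all x) and satisfies the Riccati equation q_C'(x) = −2·q_C(x)·( 2x + q_C(x) ) for every x ∈ ℝ. -/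
/-!
The denominator is positive because `erf u + 1 = (2/√π) ∫_{-∞}^u e^{-s²} ds > 0`. For the
Riccati equation write `q = 2e/D` with `e = e^{-2x²}` and `D = √(2π) (erf(√2 x) + C)`:
the factor `√(2π)` makes `D' = 4e`, and with `e' = -4x e` the quotient rule gives
`q' = (-8x e D - 8e²)/D² = -4x q - 2q²`.
-/

open Real

noncomputable def erf (u : ℝ) : ℝ :=
  (2 / Real.sqrt π) * ∫ s in (0:ℝ)..u, Real.exp (-s ^ 2)

open MeasureTheory Set

lemma integrable_exp_neg_sq : Integrable fun s : ℝ => exp (-s ^ 2) := by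
  simpa using integrable_exp_neg_mul_sq one_pos

lemma integral_Iic_zero_exp_neg_sq : ∫ s in Iic (0 : ℝ), exp (-s ^ 2) = √π / 2 := by
  have h := integral_comp_neg_Ioi 0 fun s : ℝ => exp (-s ^ 2)
  simp only [neg_sq, neg_zero] at h
  simpa [← h] using integral_gaussian_Ioi 1

lemma integral_Iic_exp_neg_sq_pos (u : ℝ) : 0 < ∫ s in Iic u, exp (-s ^ 2) := by
  rw [setIntegral_pos_iff_support_of_nonneg_ae
    (Filter.Eventually.of_forall fun s => (exp_pos _).le) integrable_exp_neg_sq.integrableOn]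
  simp [Function.support, (exp_pos _).ne']

lemma erf_add_one (u : ℝ) : erf u + 1 = 2 / √π * ∫ s in Iic u, exp (-s ^ 2) := by
  have hπ : √π ≠ 0 := (sqrt_pos.2 pi_pos).ne'
  rw [erf, ← intervalIntegral.integral_Iic_sub_Iic integrable_exp_neg_sq.integrableOn
    integrable_exp_neg_sq.integrableOn, integral_Iic_zero_exp_neg_sq]
  field_simp
  ring

lemma neg_one_lt_erf (u : ℝ) : -1 < erf u := by
  have h : 0 < erf u + 1 :=
    erf_add_one u ▸ mul_pos (by positivity) (integral_Iic_exp_neg_sq_pos u)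
  linarith

lemma hasDerivAt_erf (u : ℝ) : HasDerivAt erf (2 / √π * exp (-u ^ 2)) u :=
  (intervalIntegral.integral_hasDerivAt_right integrable_exp_neg_sq.intervalIntegrable
    ((by fun_prop : Continuous fun s : ℝ => exp (-s ^ 2)).stronglyMeasurableAtFilter _ _)
    (by fun_prop)).const_mul _

lemma hasDerivAt_sqrt_two_pi_mul_erf_sqrt_two_mul (x : ℝ) :
    HasDerivAt (fun x => √(2 * π) * erf (√2 * x)) (4 * exp (-(2 * x ^ 2))) x := by
  have h2 : √2 ^ 2 = 2 := sq_sqrt zero_le_two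
  have hπ : √π ≠ 0 := (sqrt_pos.2 pi_pos).ne'
  refine (((hasDerivAt_erf (√2 * x)).comp x ((hasDerivAt_id x).const_mul √2)).const_mul
    √(2 * π)).congr_deriv ?_
  rw [mul_pow, h2, sqrt_mul zero_le_two]
  field_simp
  rw [h2]
  ring

lemma hasDerivAt_exp_neg_two_mul_sq (x : ℝ) :
    HasDerivAt (fun x => exp (-(2 * x ^ 2))) (-(4 * x) * exp (-(2 * x ^ 2))) x :=
  (((hasDerivAt_pow 2 x).const_mul 2).fun_neg.exp).congr_deriv (by ring)

lemma HasDerivAt.two_mul_div_riccati {e D : ℝ → ℝ} {x : ℝ}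
    (he : HasDerivAt e (-(4 * x) * e x) x) (hD : HasDerivAt D (4 * e x) x) (hDx : D x ≠ 0) :
    HasDerivAt (fun y => 2 * e y / D y) (-2 * (2 * e x / D x) * (2 * x + 2 * e x / D x)) x := by
  refine ((he.const_mul 2).div hD hDx).congr_deriv ?_
  field_simp
  ring

/-- For `C ≥ 1` the function `q_C(x) = 2e^{−2x²}/(√(2π)(erf(√2 x) + C))` is well-defined
(the denominator is positive) and solves the Riccati equation
`q_C'(x) = −2 q_C(x) (2x + q_C(x))`. -/
theorem stmt8 (C : ℝ) (hC : 1 ≤ C) :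
    (∀ x : ℝ, 0 < Real.sqrt (2 * π) * (erf (Real.sqrt 2 * x) + C)) ∧
    (∀ x : ℝ,
      HasDerivAt
        (fun x : ℝ =>
          2 * Real.exp (-(2 * x ^ 2)) / (Real.sqrt (2 * π) * (erf (Real.sqrt 2 * x) + C)))
        (-2 * (2 * Real.exp (-(2 * x ^ 2)) / (Real.sqrt (2 * π) * (erf (Real.sqrt 2 * x) + C))) *
          (2 * x +
            2 * Real.exp (-(2 * x ^ 2)) / (Real.sqrt (2 * π) * (erf (Real.sqrt 2 * x) + C))))
        x) := by
  have hden (x : ℝ) : 0 < √(2 * π) * (erf (√2 * x) + C) :=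
    mul_pos (by positivity) (by linarith [neg_one_lt_erf (√2 * x)])
  refine ⟨hden, fun x => ?_⟩
  have hD : HasDerivAt (fun x => √(2 * π) * (erf (√2 * x) + C)) (4 * exp (-(2 * x ^ 2))) x := by
    simpa only [mul_add] using (hasDerivAt_sqrt_two_pi_mul_erf_sqrt_two_mul x).add_const _
  exact (hasDerivAt_exp_neg_two_mul_sq x).two_mul_div_riccati hD (hden x).ne'
end
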